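/- Let H be a densely defined self-adjoint operator on a complex Hilbert space 𝒳, let B be a CAR representation of a complex Hilbert space 𝒦 on 𝒳, and let E₀, λ, ε be real numbers with ε > 0. Suppose: (i) Ξ ∈ D(H) is a unit vector with ‖(H − E₀)Ξ‖ ≤ ε; (ii) h ∈ 𝒦 with ‖h‖ = 1, and k ∈ 𝒦; (iii) R : D(H) → 𝒳 is a map such that for all Φ, Ψ ∈ D(H): ⟨HΦ, (B(h) + B(h)*)Ψ⟩ − ⟨(B(h) + B(h)*)Φ, HΨ⟩ = ⟨Φ, (B(k)* − B(k))Ψ + RΨ⟩. Then Ψ₀ := (B(h) + B(h)*)Ξ is a unit vector belonging to D(H), and ‖HΨ₀ − (E₀ + λ)Ψ₀‖ ≤ 2ε + 2‖k − λh‖ + 2|λ|·‖B(h)Ξ‖ + ‖RΞ‖. -/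

import Mathlib

/-!
By the CAR, `Φ = B(h) + B(h)*` is self-adjoint with `Φ² = ‖h‖² = 1`, so `Ψ₀ = ΦΞ` is a unit
vector. The weak commutator identity says that `Φ' ↦ ⟨HΦ', ΦΞ⟩` is represented by the vector
`Φ(HΞ) + (B(k)* − B(k))Ξ + RΞ`, so self-adjointness of `H` puts `ΦΞ` in `D(H)` with that image.
Subtracting `(E₀ + λ)ΦΞ` leaves `Φ((H − E₀)Ξ) + (B(g)* − B(g))Ξ − 2λB(h)Ξ + RΞ` with
`g = k − λh`, and each term is bounded using `‖B(g)x‖² + ‖B(g)*x‖² = ‖g‖²‖x‖²`.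
-/

open ContinuousLinearMap in
/-- A CAR representation of a complex Hilbert space `𝒦` on a complex Hilbert space `𝒳`:
a map `B` assigning to each `f ∈ 𝒦` a bounded operator on `𝒳`, conjugate-linear in `f`,
satisfying `B(f)B(g)* + B(g)*B(f) = ⟨f,g⟩·I` and `B(f)B(g) + B(g)B(f) = 0`. -/
structure CARRep (𝒦 𝒳 : Type*) [NormedAddCommGroup 𝒦] [InnerProductSpace ℂ 𝒦]
    [NormedAddCommGroup 𝒳] [InnerProductSpace ℂ 𝒳] [CompleteSpace 𝒳] where
  B : 𝒦 → (𝒳 →L[ℂ] 𝒳)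
  map_add : ∀ f g, B (f + g) = B f + B g
  map_smul : ∀ (c : ℂ) (f), B (c • f) = (starRingEnd ℂ c) • B f
  car_mixed : ∀ f g,
    B f * adjoint (B g) + adjoint (B g) * B f = (inner ℂ f g : ℂ) • (1 : 𝒳 →L[ℂ] 𝒳)
  car_ann : ∀ f g, B f * B g + B g * B f = 0

open ContinuousLinearMap

section SelfAdjoint

open LinearPMap

variable {𝕜 E : Type*} [RCLike 𝕜] [NormedAddCommGroup E] [InnerProductSpace 𝕜 E]
  [CompleteSpace E] {A : E →ₗ.[𝕜] E}

theorem IsSelfAdjoint.exists_mem_domain_of_forall_inner_eq (hA : IsSelfAdjoint A)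
    {y w : E} (h : ∀ x : A.domain, inner 𝕜 (A x) y = inner 𝕜 (x : E) w) :
    ∃ hy : y ∈ A.domain, A ⟨y, hy⟩ = w := by
  have hconj (x : A.domain) : inner 𝕜 w (x : E) = inner 𝕜 y (A x) := by
    rw [← inner_conj_symm, ← h, inner_conj_symm]
  have hy : y ∈ A†.domain := mem_adjoint_domain_of_exists y ⟨w, hconj⟩
  exact (isSelfAdjoint_def.mp hA) ▸ ⟨hy, adjoint_apply_eq hA.dense_domain ⟨y, hy⟩ hconj⟩

theorem IsSelfAdjoint.exists_mem_domain_of_commutator (hA : IsSelfAdjoint A)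
    {C : E →L[𝕜] E} (hC : IsSelfAdjoint C) (ξ : A.domain) {v : E}
    (h : ∀ x : A.domain, inner 𝕜 (A x) (C ξ) - inner 𝕜 (C x) (A ξ) = inner 𝕜 (x : E) v) :
    ∃ hy : C ξ ∈ A.domain, A ⟨C ξ, hy⟩ = C (A ξ) + v :=
  hA.exists_mem_domain_of_forall_inner_eq fun x => by
    rw [inner_add_right, ← h, ← adjoint_inner_left C (A ξ) (x : E), hC.adjoint_eq]
    ring

end SelfAdjoint

namespace CARRep

variable {𝒦 𝒳 : Type*} [NormedAddCommGroup 𝒦] [InnerProductSpace ℂ 𝒦]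
  [NormedAddCommGroup 𝒳] [InnerProductSpace ℂ 𝒳] [CompleteSpace 𝒳] (rep : CARRep 𝒦 𝒳)

theorem map_sub (f g : 𝒦) : rep.B (f - g) = rep.B f - rep.B g :=
  eq_sub_of_add_eq (by rw [← rep.map_add, sub_add_cancel])

theorem map_ofReal_smul (r : ℝ) (f : 𝒦) : rep.B ((r : ℂ) • f) = (r : ℂ) • rep.B f := by
  rw [rep.map_smul, Complex.conj_ofReal]

theorem B_mul_self (f : 𝒦) : rep.B f * rep.B f = 0 := by
  have h : (2 : ℂ) • (rep.B f * rep.B f) = 0 := by rw [two_smul]; exact rep.car_ann f f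
  exact (smul_eq_zero.mp h).resolve_left two_ne_zero

theorem adjoint_B_mul_self (f : 𝒦) : adjoint (rep.B f) * adjoint (rep.B f) = 0 := by
  simpa only [star_mul, star_eq_adjoint, star_zero] using congrArg star (rep.B_mul_self f)

theorem norm_sq_B_apply_add_norm_sq_adjoint_B_apply (f : 𝒦) (x : 𝒳) :
    ‖rep.B f x‖ ^ 2 + ‖adjoint (rep.B f) x‖ ^ 2 = ‖f‖ ^ 2 * ‖x‖ ^ 2 := by
  rw [apply_norm_sq_eq_inner_adjoint_right, apply_norm_sq_eq_inner_adjoint_right, adjoint_adjoint,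
    ← _root_.map_add, ← inner_add_right, ← add_apply, ← mul_def, ← mul_def, add_comm,
    rep.car_mixed, smul_apply, one_apply_eq_self, inner_smul_right, inner_self_eq_norm_sq_to_K,
    inner_self_eq_norm_sq_to_K]
  norm_cast

theorem norm_B_apply_le (f : 𝒦) (x : 𝒳) : ‖rep.B f x‖ ≤ ‖f‖ * ‖x‖ := by
  rw [← pow_le_pow_iff_left₀ (norm_nonneg _) (by positivity) two_ne_zero, mul_pow,
    ← rep.norm_sq_B_apply_add_norm_sq_adjoint_B_apply]
  exact le_add_of_nonneg_right (sq_nonneg _)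

theorem norm_adjoint_B_apply_le (f : 𝒦) (x : 𝒳) : ‖adjoint (rep.B f) x‖ ≤ ‖f‖ * ‖x‖ := by
  rw [← pow_le_pow_iff_left₀ (norm_nonneg _) (by positivity) two_ne_zero, mul_pow,
    ← rep.norm_sq_B_apply_add_norm_sq_adjoint_B_apply]
  exact le_add_of_nonneg_left (sq_nonneg _)

theorem norm_adjoint_B_sub_B_apply_le (f : 𝒦) (x : 𝒳) :
    ‖(adjoint (rep.B f) - rep.B f) x‖ ≤ 2 * ‖f‖ * ‖x‖ := by
  rw [sub_apply]
  linarith [norm_sub_le (adjoint (rep.B f) x) (rep.B f x), rep.norm_B_apply_le f x,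
    rep.norm_adjoint_B_apply_le f x]

noncomputable def field (f : 𝒦) : 𝒳 →L[ℂ] 𝒳 := rep.B f + adjoint (rep.B f)

theorem isSelfAdjoint_field (f : 𝒦) : IsSelfAdjoint (rep.field f) := by
  rw [isSelfAdjoint_iff', field, _root_.map_add, adjoint_adjoint, add_comm]

theorem field_mul_self (f : 𝒦) : rep.field f * rep.field f = (‖f‖ ^ 2 : ℂ) • 1 := by
  have hexpand : rep.field f * rep.field f = rep.B f * rep.B f
      + (rep.B f * adjoint (rep.B f) + adjoint (rep.B f) * rep.B f)
      + adjoint (rep.B f) * adjoint (rep.B f) := by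
    rw [field]; noncomm_ring
  rw [hexpand, rep.B_mul_self, rep.adjoint_B_mul_self, rep.car_mixed, inner_self_eq_norm_sq_to_K,
    zero_add, add_zero]
  rfl

theorem norm_field_apply (f : 𝒦) (x : 𝒳) : ‖rep.field f x‖ = ‖f‖ * ‖x‖ := by
  rw [← sq_eq_sq₀ (norm_nonneg _) (by positivity), apply_norm_sq_eq_inner_adjoint_right,
    (rep.isSelfAdjoint_field f).adjoint_eq, ← mul_def, rep.field_mul_self, smul_apply,
    one_apply_eq_self, inner_smul_right, inner_self_eq_norm_sq_to_K, mul_pow]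
  norm_num [← Complex.ofReal_pow, ← Complex.ofReal_mul]

end CARRep

open ContinuousLinearMap in
theorem weyl_vector_estimate_general {𝒦 𝒳 : Type*}
    [NormedAddCommGroup 𝒦] [InnerProductSpace ℂ 𝒦]
    [NormedAddCommGroup 𝒳] [InnerProductSpace ℂ 𝒳] [CompleteSpace 𝒳]
    (H : 𝒳 →ₗ.[ℂ] 𝒳) (hsa : IsSelfAdjoint H)
    (rep : CARRep 𝒦 𝒳) (E₀ lam ε : ℝ)
    (Ξ : H.domain) (hΞnorm : ‖(Ξ : 𝒳)‖ = 1)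
    (hΞ : ‖H Ξ - (E₀ : ℂ) • (Ξ : 𝒳)‖ ≤ ε)
    (h k : 𝒦) (hh : ‖h‖ = 1)
    (R : H.domain → 𝒳)
    (hR : ∀ Φ Ψ : H.domain,
      (inner ℂ (H Φ) ((rep.B h + adjoint (rep.B h)) (Ψ : 𝒳)) : ℂ)
          - (inner ℂ ((rep.B h + adjoint (rep.B h)) (Φ : 𝒳)) (H Ψ) : ℂ)
        = (inner ℂ (Φ : 𝒳) ((adjoint (rep.B k) - rep.B k) (Ψ : 𝒳) + R Ψ) : ℂ)) :
    ‖(rep.B h + adjoint (rep.B h)) (Ξ : 𝒳)‖ = 1 ∧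
      ∃ hmem : (rep.B h + adjoint (rep.B h)) (Ξ : 𝒳) ∈ H.domain,
        ‖H ⟨(rep.B h + adjoint (rep.B h)) (Ξ : 𝒳), hmem⟩
            - ((E₀ + lam : ℝ) : ℂ) • ((rep.B h + adjoint (rep.B h)) (Ξ : 𝒳))‖
          ≤ 2 * ε + 2 * ‖k - (lam : ℂ) • h‖ + 2 * |lam| * ‖rep.B h (Ξ : 𝒳)‖ + ‖R Ξ‖ := by
  change ‖rep.field h Ξ‖ = 1 ∧ ∃ hmem : rep.field h Ξ ∈ H.domain,
    ‖H ⟨rep.field h Ξ, hmem⟩ - ((E₀ + lam : ℝ) : ℂ) • rep.field h Ξ‖ ≤ _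
  obtain ⟨hmem, hHΞ⟩ := hsa.exists_mem_domain_of_commutator (rep.isSelfAdjoint_field h) Ξ (hR · Ξ)
  refine ⟨by rw [rep.norm_field_apply, hh, hΞnorm, one_mul], hmem, ?_⟩
  set g := k - (lam : ℂ) • h
  have hdecomp : H ⟨rep.field h Ξ, hmem⟩ - ((E₀ + lam : ℝ) : ℂ) • rep.field h Ξ
      = rep.field h (H Ξ - (E₀ : ℂ) • Ξ) + (adjoint (rep.B g) - rep.B g) Ξ
        - (2 * lam : ℂ) • rep.B h Ξ + R Ξ := by
    rw [hHΞ, rep.map_sub, rep.map_ofReal_smul, _root_.map_sub adjoint, map_smulₛₗ adjoint,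
      Complex.conj_ofReal, CARRep.field]
    simp only [add_apply, sub_apply, smul_apply, _root_.map_sub, map_smul]
    push_cast
    module
  have hε : 0 ≤ ε := (norm_nonneg _).trans hΞ
  have hΦ : ‖rep.field h (H Ξ - (E₀ : ℂ) • Ξ)‖ ≤ ε := by
    rwa [rep.norm_field_apply, hh, one_mul]
  have hg : ‖(adjoint (rep.B g) - rep.B g) Ξ‖ ≤ 2 * ‖g‖ := by
    simpa only [hΞnorm, mul_one] using rep.norm_adjoint_B_sub_B_apply_le g Ξ
  have hlam : ‖(2 * lam : ℂ) • rep.B h Ξ‖ = 2 * |lam| * ‖rep.B h Ξ‖ := by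
    rw [norm_smul, norm_mul, Complex.norm_two, Complex.norm_real, Real.norm_eq_abs]
  rw [hdecomp]
  calc _ ≤ ‖rep.field h (H Ξ - (E₀ : ℂ) • Ξ)‖ + ‖(adjoint (rep.B g) - rep.B g) Ξ‖
        + ‖(2 * lam : ℂ) • rep.B h Ξ‖ + ‖R Ξ‖ :=
        (norm_add_le _ _).trans (add_le_add_left (norm_sub_le_of_le (norm_add_le _ _) le_rfl) _)
    _ ≤ 2 * ε + 2 * ‖g‖ + 2 * |lam| * ‖rep.B h Ξ‖ + ‖R Ξ‖ := by
        linarith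

open ContinuousLinearMap in
/-- **key quantitative estimate.** Let `H` be a densely defined self-adjoint
operator on `𝒳`, `B` a CAR representation of `𝒦` on `𝒳`, `ε > 0`, `Ξ ∈ D(H)` a unit vector
with `‖(H − E₀)Ξ‖ ≤ ε`, `h ∈ 𝒦` a unit vector, `k ∈ 𝒦`, and `R : D(H) → 𝒳` a map such that
`⟨HΦ, (B(h)+B(h)*)Ψ⟩ − ⟨(B(h)+B(h)*)Φ, HΨ⟩ = ⟨Φ, (B(k)* − B(k))Ψ + RΨ⟩` for all
`Φ, Ψ ∈ D(H)`. Then `Ψ₀ := (B(h)+B(h)*)Ξ` is a unit vector in `D(H)` and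
`‖HΨ₀ − (E₀+λ)Ψ₀‖ ≤ 2ε + 2‖k − λh‖ + 2|λ|‖B(h)Ξ‖ + ‖RΞ‖`. -/
theorem weyl_vector_estimate {𝒦 𝒳 : Type*}
    [NormedAddCommGroup 𝒦] [InnerProductSpace ℂ 𝒦]
    [NormedAddCommGroup 𝒳] [InnerProductSpace ℂ 𝒳] [CompleteSpace 𝒳]
    (H : 𝒳 →ₗ.[ℂ] 𝒳) (hdense : Dense (H.domain : Set 𝒳)) (hsa : IsSelfAdjoint H)
    (rep : CARRep 𝒦 𝒳) (E₀ lam ε : ℝ) (hε : 0 < ε)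
    (Ξ : H.domain) (hΞnorm : ‖(Ξ : 𝒳)‖ = 1)
    (hΞ : ‖H Ξ - (E₀ : ℂ) • (Ξ : 𝒳)‖ ≤ ε)
    (h k : 𝒦) (hh : ‖h‖ = 1)
    (R : H.domain → 𝒳)
    (hR : ∀ Φ Ψ : H.domain,
      (inner ℂ (H Φ) ((rep.B h + adjoint (rep.B h)) (Ψ : 𝒳)) : ℂ)
          - (inner ℂ ((rep.B h + adjoint (rep.B h)) (Φ : 𝒳)) (H Ψ) : ℂ)
        = (inner ℂ (Φ : 𝒳) ((adjoint (rep.B k) - rep.B k) (Ψ : 𝒳) + R Ψ) : ℂ)) :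
    ‖(rep.B h + adjoint (rep.B h)) (Ξ : 𝒳)‖ = 1 ∧
      ∃ hmem : (rep.B h + adjoint (rep.B h)) (Ξ : 𝒳) ∈ H.domain,
        ‖H ⟨(rep.B h + adjoint (rep.B h)) (Ξ : 𝒳), hmem⟩
            - ((E₀ + lam : ℝ) : ℂ) • ((rep.B h + adjoint (rep.B h)) (Ξ : 𝒳))‖
          ≤ 2 * ε + 2 * ‖k - (lam : ℂ) • h‖ + 2 * |lam| * ‖rep.B h (Ξ : 𝒳)‖ + ‖R Ξ‖ :=
  weyl_vector_estimate_general H hsa rep E₀ lam ε Ξ hΞnorm hΞ h k hh R hR
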